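/- Let n be an even natural number and γ > 0, Δ > 0, R_S > 0. Set C_n = γ^{n+1} 2ⁿ Δ^{(n+1)/2} R_S^{n/2+1} / (π (n+2) C(n, n/2)). Then the function L(t) = ((3(n+2)/2) · C_n · t)^{2/(3(n+2))} satisfies L(0) = 0, is differentiable on (0,∞) with L'(t) = C_n · L(t)^{−3n/2−2} for all t > 0, and L(T) = R_S holds exactly for T = T_BH(n) := 2π C(n, n/2) R_S^{n+2} / (3 γ^{n+1} 2ⁿ Δ^{(n+1)/2}). In particular, the black-hole lifetime for even n scales as the (n+2)-th power of R_S, and for n = 0 it equals 2π R_S²/(3γ√Δ). -/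

import Mathlib

open Real

/-- Shock-speed constant for even `n`:
`C_n = γ^{n+1} 2ⁿ Δ^{(n+1)/2} R_S^{n/2+1} / (π(n+2) C(n,n/2))`. -/
noncomputable def Cshock (n : ℕ) (γ Δ RS : ℝ) : ℝ :=
  γ ^ (n + 1) * 2 ^ n * Δ ^ (((n : ℝ) + 1) / 2) * RS ^ ((n : ℝ) / 2 + 1) /
    (π * ((n : ℝ) + 2) * (n.choose (n / 2) : ℝ))

/-- Shock location: `L(t) = ((3(n+2)/2) C_n t)^{2/(3(n+2))}`. -/
noncomputable def Lshock (n : ℕ) (γ Δ RS t : ℝ) : ℝ :=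
  ((3 * ((n : ℝ) + 2) / 2) * Cshock n γ Δ RS * t) ^ ((2 : ℝ) / (3 * ((n : ℝ) + 2)))

/-- Black-hole lifetime for even `n`:
`T_BH(n) = 2π C(n,n/2) R_S^{n+2} / (3 γ^{n+1} 2ⁿ Δ^{(n+1)/2})`. -/
noncomputable def TBH (n : ℕ) (γ Δ RS : ℝ) : ℝ :=
  2 * π * (n.choose (n / 2) : ℝ) * RS ^ (n + 2) /
    (3 * γ ^ (n + 1) * 2 ^ n * Δ ^ (((n : ℝ) + 1) / 2))

/-
The trajectory is the power law `L(t) = ((m+1) C t)^{1/(m+1)}` with `m = 3n/2 + 2`, the separable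
solution of `L' = C L^{-m}` through `L(0) = 0`: the chain rule gives
`L' = C ((m+1) C t)^{1/(m+1) - 1} = C L^{-m}`. It reaches `R` at `T = R^{m+1} / ((m+1) C)`, and
with `m + 1 = 3(n+2)/2` the factor `R_S^{n/2+1}` in `C_n` turns `R_S^{m+1}` into `R_S^{n+2}`.
-/

theorem hasDerivAt_rpow_inv_succ_mul {C m t : ℝ} (h : 0 < (m + 1) * C * t) :
    HasDerivAt (fun s => ((m + 1) * C * s) ^ (1 / (m + 1)))
      (C * (((m + 1) * C * t) ^ (1 / (m + 1))) ^ (-m)) t := by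
  have hm : m + 1 ≠ 0 := by
    rintro hm
    simp [hm] at h
  have hlin : HasDerivAt (fun s => (m + 1) * C * s) ((m + 1) * C) t := by
    simpa using (hasDerivAt_id t).const_mul ((m + 1) * C)
  refine ((hasDerivAt_rpow_const (p := 1 / (m + 1)) (Or.inl h.ne')).comp t hlin).congr_deriv ?_
  rw [← rpow_mul h.le, show 1 / (m + 1) * -m = 1 / (m + 1) - 1 by field_simp; ring]
  field_simp

theorem rpow_inv_succ_mul_hittingTime {C m R : ℝ} (hC : C ≠ 0) (hm : m + 1 ≠ 0) (hR : 0 ≤ R) :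
    ((m + 1) * C * (R ^ (m + 1) / ((m + 1) * C))) ^ (1 / (m + 1)) = R := by
  rw [mul_div_cancel₀ _ (mul_ne_zero hm hC), one_div, rpow_rpow_inv hR hm]

theorem Cshock_pos {n : ℕ} {γ Δ RS : ℝ} (hγ : 0 < γ) (hΔ : 0 < Δ) (hRS : 0 < RS) :
    0 < Cshock n γ Δ RS := by
  have hchoose : (0 : ℝ) < n.choose (n / 2) := by
    exact_mod_cast Nat.choose_pos (Nat.div_le_self n 2)
  have hΔpow := rpow_pos_of_pos hΔ (((n : ℝ) + 1) / 2)
  have hRSpow := rpow_pos_of_pos hRS ((n : ℝ) / 2 + 1)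
  unfold Cshock
  positivity

theorem Lshock_eq (n : ℕ) (γ Δ RS t : ℝ) :
    Lshock n γ Δ RS t =
      ((3 * n / 2 + 2 + 1) * Cshock n γ Δ RS * t) ^ (1 / (3 * (n : ℝ) / 2 + 2 + 1)) := by
  rw [Lshock, show 3 * ((n : ℝ) + 2) / 2 = 3 * n / 2 + 2 + 1 by ring,
    show (2 : ℝ) / (3 * (n + 2)) = 1 / (3 * n / 2 + 2 + 1) by field_simp; ring]

theorem TBH_eq {n : ℕ} {γ Δ RS : ℝ} (hγ : 0 < γ) (hΔ : 0 < Δ) (hRS : 0 < RS) :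
    TBH n γ Δ RS = RS ^ (3 * (n : ℝ) / 2 + 2 + 1) / ((3 * n / 2 + 2 + 1) * Cshock n γ Δ RS) := by
  have hchoose : (0 : ℝ) < n.choose (n / 2) := by
    exact_mod_cast Nat.choose_pos (Nat.div_le_self n 2)
  have hΔpow := rpow_pos_of_pos hΔ (((n : ℝ) + 1) / 2)
  have hRSpow := rpow_pos_of_pos hRS ((n : ℝ) / 2 + 1)
  have hsplit : RS ^ (3 * (n : ℝ) / 2 + 2 + 1) = RS ^ ((n : ℝ) / 2 + 1) * RS ^ (n + 2) := by
    rw [← rpow_natCast, ← rpow_add hRS]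
    push_cast
    ring_nf
  rw [hsplit]
  unfold TBH Cshock
  field_simp
  ring

theorem black_hole_lifetime_even_general
    (n : ℕ) (γ Δ RS : ℝ) (hγ : 0 < γ) (hΔ : 0 < Δ) (hRS : 0 < RS) :
    Lshock n γ Δ RS 0 = 0 ∧
    (∀ t, 0 < t → HasDerivAt (fun t' => Lshock n γ Δ RS t')
      (Cshock n γ Δ RS * (Lshock n γ Δ RS t) ^ (-(3 * (n : ℝ) / 2) - 2)) t) ∧
    Lshock n γ Δ RS (TBH n γ Δ RS) = RS ∧
    (n = 0 → TBH n γ Δ RS = 2 * π * RS ^ 2 / (3 * γ * Real.sqrt Δ)) := by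
  have hC := Cshock_pos (n := n) hγ hΔ hRS
  have hm : (0 : ℝ) < 3 * n / 2 + 2 + 1 := by positivity
  refine ⟨?_, fun t ht => ?_, ?_, ?_⟩
  · rw [Lshock, mul_zero, zero_rpow (by positivity)]
  · simp_rw [Lshock_eq, show -(3 * (n : ℝ) / 2) - 2 = -(3 * n / 2 + 2) by ring]
    exact hasDerivAt_rpow_inv_succ_mul (by positivity)
  · rw [Lshock_eq, TBH_eq hγ hΔ hRS]
    exact rpow_inv_succ_mul_hittingTime hC.ne' hm.ne' hRS.le
  · rintro rfl
    simp [TBH, sqrt_eq_rpow]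

/-- For even `n`, the shock trajectory `L` starts at the centre, solves the
Rankine–Hugoniot ODE `L' = C_n L^{−3n/2−2}`, and reaches the horizon `L = R_S`
exactly at `T_BH(n) ∝ R_S^{n+2}`; for `n = 0` the lifetime is
`2π R_S²/(3γ√Δ)`. -/
theorem black_hole_lifetime_even
    (n : ℕ) (hn : Even n) (γ Δ RS : ℝ) (hγ : 0 < γ) (hΔ : 0 < Δ) (hRS : 0 < RS) :
    Lshock n γ Δ RS 0 = 0 ∧
    (∀ t, 0 < t → HasDerivAt (fun t' => Lshock n γ Δ RS t')
      (Cshock n γ Δ RS * (Lshock n γ Δ RS t) ^ (-(3 * (n : ℝ) / 2) - 2)) t) ∧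
    Lshock n γ Δ RS (TBH n γ Δ RS) = RS ∧
    (n = 0 → TBH n γ Δ RS = 2 * π * RS ^ 2 / (3 * γ * Real.sqrt Δ)) :=
  black_hole_lifetime_even_general n γ Δ RS hγ hΔ hRS
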